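/- arXiv:1311.0331 — 2 statements merged into one kernel-verified Lean document; each statement's English description precedes it below -/
import Mathlib

section
/- Characterization of Wadge hardness for Hausdorff difference classes in the Scott domain: for every H ⊆ 𝒫(ℕ) and every ordinal α with 1 ≤ α < ω₁, H is Wadge hard for D_α(𝒫(ℕ)) if and only if there exists a decreasing H-alternating chain in 𝒫(ℕ) of length α+1. -/
open Topology

/-- The Scott topology on 𝒫(ℕ), generated by the basic open sets
`B_A = {X : A ⊆ X}` for finite `A ⊆ ℕ`. -/
def ScottPN : TopologicalSpace (Set ℕ) :=
  TopologicalSpace.generateFrom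
    {O : Set (Set ℕ) | ∃ A : Set ℕ, A.Finite ∧ O = {X : Set ℕ | A ⊆ X}}

/-- An ordinal is even if its canonical decomposition `λ + n`
(`λ` zero or a limit, `n < ω`) has `n` even. -/
def OrdEven (o : Ordinal) : Prop :=
  ∃ (l : Ordinal) (n : ℕ), (l = 0 ∨ Order.IsSuccLimit l) ∧ o = l + 2 * n

/-- Two ordinals have the same parity. -/
def SameParity (a b : Ordinal) : Prop := OrdEven a ↔ OrdEven b

/-- The Hausdorff difference operation `D_α`. -/
def DOp {E : Type*} (α : Ordinal) (U : Ordinal → Set E) : Set E :=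
  ⋃ β ∈ {β : Ordinal | β < α ∧ ¬ SameParity β α}, (U β \ ⋃ γ ∈ Set.Iio β, U γ)

/-- Membership in the Hausdorff difference class `D_α(E)`. -/
def MemD {E : Type*} (t : TopologicalSpace E) (α : Ordinal) (A : Set E) : Prop :=
  ∃ U : Ordinal → Set E, (∀ β < α, IsOpen[t] (U β)) ∧ A = DOp α U
/-- A decreasing `A`-alternating chain of length `α+1` in `𝒫(ℕ)`. -/
def AltChain (A : Set (Set ℕ)) (α : Ordinal) (X : Ordinal → Set ℕ) : Prop :=
  (∀ β δ : Ordinal, β < δ → δ ≤ α → X δ ⊂ X β) ∧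
  (∀ β ≤ α, X β ∈ A ↔ ¬ SameParity β α)

/-- An `A`-special `(α+1)`-chain in `𝒫(ℕ)`. -/
def SpecialChain (A : Set (Set ℕ)) (α : Ordinal) (X : Ordinal → Set ℕ) : Prop :=
  AltChain A α X ∧
  (∀ β < α, ∀ Y : Set ℕ, Y ⊆ X β → X (β + 1) ⊂ Y → (Y ∈ A ↔ ¬ SameParity β α)) ∧
  (∀ Y : Set ℕ, Y ⊆ X α → Y ∉ A)
/-- Wadge reducibility between families of subsets of ℕ (Scott topology). -/
def WadgeLe (A B : Set (Set ℕ)) : Prop :=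
  ∃ f : Set ℕ → Set ℕ, Continuous[ScottPN, ScottPN] f ∧ A = f ⁻¹' B

/-!
For open sets `U β`, membership of `x` in `DOp α U` only depends on the parity of the rank of
`x`: the first `β < α` with `x ∈ U β`, or `α` if there is none. An alternating chain `X` thus
gives the reduction `Z ↦ X (rank Z)`, which is Scott continuous because `X` decreases and the
sets `{rank < γ}` are open. Conversely, a countable `α` embeds `α + 1` into `𝒫(ℕ)` as a strictly
decreasing chain, which some set in `D_α` meets in exactly the parity pattern needed; a reduction
of that set to `H` maps the chain to an alternating one.
-/

open Order Set Ordinal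

section Parity

lemma add_natCast_mod_omega0 {l : Ordinal} (hl : l = 0 ∨ IsSuccLimit l) (n : ℕ) :
    (l + n) % ω = n := by
  have hdvd : ω ∣ l := by
    rcases hl with rfl | hl
    · exact dvd_zero _
    · exact Ordinal.isSuccPrelimit_iff_omega0_dvd.mp hl.isSuccPrelimit
  obtain ⟨k, rfl⟩ := hdvd
  rw [Ordinal.mul_add_mod_self, Ordinal.mod_eq_of_lt (Ordinal.natCast_lt_omega0 n)]

lemma ordEven_or_ordEven_add_one (o : Ordinal) : OrdEven o ∨ OrdEven (o + 1) := by
  induction o using Ordinal.limitRecOn with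
  | zero => exact Or.inl ⟨0, 0, Or.inl rfl, by simp⟩
  | add_one o ih =>
    rcases ih with ⟨l, n, hl, rfl⟩ | h
    · refine Or.inr ⟨l, n + 1, hl, ?_⟩
      push_cast
      rw [mul_add, mul_one, add_assoc, add_assoc, one_add_one_eq_two]
    · exact Or.inl h
  | limit o ho _ => exact Or.inl ⟨o, 0, Or.inr ho, by simp⟩

/-- Parity is read off from `o % ω`, which is `2n` resp. `2n + 1` for `o` resp. `o + 1`. -/
lemma not_ordEven_and_ordEven_add_one (o : Ordinal) : ¬ (OrdEven o ∧ OrdEven (o + 1)) := by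
  rintro ⟨⟨l, n, hl, rfl⟩, ⟨l', n', hl', h⟩⟩
  have h' : l + ((2 * n + 1 : ℕ) : Ordinal) = l' + ((2 * n' : ℕ) : Ordinal) := by
    push_cast
    rw [← add_assoc, h]
  have hmod := congrArg (· % ω) h'
  simp only [add_natCast_mod_omega0 hl, add_natCast_mod_omega0 hl', Nat.cast_inj] at hmod
  omega

lemma ordEven_add_one_iff (o : Ordinal) : OrdEven (o + 1) ↔ ¬ OrdEven o := by
  have := ordEven_or_ordEven_add_one o
  have := not_ordEven_and_ordEven_add_one o
  tauto

lemma sameParity_add_one_left (β γ : Ordinal) : SameParity (β + 1) γ ↔ ¬ SameParity β γ := by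
  unfold SameParity
  rw [ordEven_add_one_iff]
  tauto

end Parity

section ScottTopology

lemma isOpen_scottPN_setOf_mem (n : ℕ) : IsOpen[ScottPN] {Z : Set ℕ | n ∈ Z} :=
  TopologicalSpace.GenerateOpen.basic _ ⟨{n}, finite_singleton n, by simp⟩

lemma isOpen_scottPN_setOf_not_subset (S : Set ℕ) : IsOpen[ScottPN] {Z : Set ℕ | ¬ Z ⊆ S} := by
  have hunion : {Z : Set ℕ | ¬ Z ⊆ S} = ⋃ n ∈ Sᶜ, {Z : Set ℕ | n ∈ Z} := by
    ext Z
    simp only [mem_ofPred_eq, not_subset, mem_iUnion, mem_compl_iff, exists_prop]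
    tauto
  rw [hunion]
  exact @isOpen_biUnion _ _ ScottPN _ _ fun n _ => isOpen_scottPN_setOf_mem n

lemma isUpperSet_of_isOpen_scottPN {O : Set (Set ℕ)} (hO : IsOpen[ScottPN] O) : IsUpperSet O := by
  induction hO with
  | basic s hs =>
    obtain ⟨A, -, rfl⟩ := hs
    exact fun Y Z hYZ hY => hY.trans hYZ
  | univ => exact isUpperSet_univ
  | inter s t _ _ hs ht => exact hs.inter ht
  | sUnion S _ hS => exact isUpperSet_sUnion hS

lemma monotone_of_continuous_scottPN {f : Set ℕ → Set ℕ} (hf : Continuous[ScottPN, ScottPN] f) :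
    Monotone f := fun _ _ hYZ n hn =>
  isUpperSet_of_isOpen_scottPN
    (@Continuous.isOpen_preimage _ _ ScottPN ScottPN f hf _ (isOpen_scottPN_setOf_mem n)) hYZ hn

end ScottTopology

section DifferenceRank

variable {E : Type*} {α β γ δ : Ordinal} {U : Ordinal → Set E} {x : E}

/-- The least `β < α` with `x ∈ U β`, and `α` if there is none. -/
noncomputable def dRank (α : Ordinal) (U : Ordinal → Set E) (x : E) : Ordinal :=
  sInf (insert α {β | β < α ∧ x ∈ U β})

lemma dRank_le : dRank α U x ≤ α :=
  csInf_le' (mem_insert α _)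

lemma dRank_le_of_mem (hβ : β < α) (hx : x ∈ U β) : dRank α U x ≤ β :=
  csInf_le' (mem_insert_of_mem α ⟨hβ, hx⟩)

lemma mem_of_dRank_lt (h : dRank α U x < α) : x ∈ U (dRank α U x) := by
  rcases (csInf_mem (insert_nonempty α _) : dRank α U x ∈ insert α _) with heq | hmem
  · exact absurd heq h.ne
  · exact hmem.2

lemma dRank_lt_iff (hγ : γ ≤ α) : dRank α U x < γ ↔ ∃ β < γ, x ∈ U β :=
  ⟨fun h => ⟨_, h, mem_of_dRank_lt (h.trans_le hγ)⟩,
    fun ⟨_, hβ, hx⟩ => (dRank_le_of_mem (hβ.trans_le hγ) hx).trans_lt hβ⟩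

lemma dRank_eq_of (hδ : δ ≤ α) (hbelow : ∀ β < δ, x ∉ U β) (hat : δ < α → x ∈ U δ) :
    dRank α U x = δ := by
  refine le_antisymm ?_ (not_lt.mp fun h => ?_)
  · rcases hδ.lt_or_eq with hlt | rfl
    · exact dRank_le_of_mem hlt (hat hlt)
    · exact dRank_le
  · obtain ⟨β, hβ, hx⟩ := (dRank_lt_iff hδ).mp h
    exact hbelow β hβ hx

lemma mem_DOp_iff_dRank : x ∈ DOp α U ↔ ¬ SameParity (dRank α U x) α := by
  simp only [DOp, mem_iUnion, mem_sdiff, mem_Iio, mem_ofPred_eq, exists_prop, not_exists, not_and]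
  constructor
  · rintro ⟨β, ⟨hβ, hpar⟩, hx, hbelow⟩
    rwa [dRank_eq_of hβ.le hbelow fun _ => hx]
  · intro hpar
    have hlt : dRank α U x < α := dRank_le.lt_of_ne fun h => hpar (by rw [h]; exact Iff.rfl)
    exact ⟨_, ⟨hlt, hpar⟩, mem_of_dRank_lt hlt,
      fun γ hγ hx => (dRank_le_of_mem (hγ.trans hlt) hx).not_gt hγ⟩

lemma isOpen_setOf_dRank_lt {t : TopologicalSpace E} (hU : ∀ β < α, IsOpen[t] (U β))
    (hγ : γ ≤ α) : IsOpen[t] {x | dRank α U x < γ} := by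
  have hunion : {x | dRank α U x < γ} = ⋃ β ∈ Iio γ, U β := by
    ext x
    simp only [mem_ofPred_eq, dRank_lt_iff hγ, mem_iUnion, mem_Iio, exists_prop]
  rw [hunion]
  exact @isOpen_biUnion _ _ t _ _ fun β hβ => hU β (hβ.trans_le hγ)

end DifferenceRank

section Chains

variable {H : Set (Set ℕ)} {α : Ordinal}

lemma exists_strictAntiOn_set_nat {ι : Type*} [Preorder ι] {s : Set ι} (hs : s.Countable) :
    ∃ X : ι → Set ℕ, StrictAntiOn X s := by
  obtain ⟨g, hg⟩ := countable_iff_exists_injOn.mp hs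
  refine ⟨fun β => g '' {γ ∈ s | β ≤ γ}, fun β hβ δ hδ hβδ => ?_⟩
  refine ssubset_iff_subset_not_subset.mpr ⟨?_, fun hsub => ?_⟩
  · exact image_mono fun γ ⟨hγ, hδγ⟩ => ⟨hγ, hβδ.le.trans hδγ⟩
  · obtain ⟨γ, ⟨hγ, hδγ⟩, hgγ⟩ := hsub ⟨β, ⟨hβ, le_rfl⟩, rfl⟩
    rw [hg hγ hβ hgγ] at hδγ
    exact hβδ.not_ge hδγ

lemma countable_Iic_of_card_le_aleph0 (h : α.card ≤ Cardinal.aleph0) : (Iic α).Countable := by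
  rw [← Iio_succ, ← Cardinal.le_aleph0_iff_set_countable, Cardinal.mk_Iio_ordinal,
    Order.succ_eq_add_one, card_add_one, Cardinal.lift_le_aleph0]
  exact Cardinal.add_le_aleph0.mpr ⟨h, Cardinal.one_le_aleph0⟩

lemma AltChain.strictAntiOn {X : Ordinal → Set ℕ} (hX : AltChain H α X) :
    StrictAntiOn X (Iic α) :=
  fun _ _ _ hδ hβδ => hX.1 _ _ hβδ hδ

/-- Consecutive members of an alternating family differ, so antitone already means strict. -/
lemma altChain_of_antitoneOn {X : Ordinal → Set ℕ} (hX : AntitoneOn X (Iic α))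
    (hmem : ∀ β ≤ α, X β ∈ H ↔ ¬ SameParity β α) : AltChain H α X := by
  refine ⟨fun β δ hβδ hδ => ?_, hmem⟩
  have hsucc : β + 1 ≤ δ := add_one_le_iff.mpr hβδ
  have hβ : β ∈ Iic α := (hβδ.le.trans hδ : β ≤ α)
  have hβ' : β + 1 ∈ Iic α := (hsucc.trans hδ : β + 1 ≤ α)
  have hne : X (β + 1) ≠ X β := fun heq => by
    have := hmem (β + 1) hβ'
    rw [heq, hmem β hβ, sameParity_add_one_left] at this
    tauto
  calc X δ ⊆ X (β + 1) := hX hβ' hδ hsucc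
    _ ⊂ X β := (hX hβ hβ' (lt_add_one β).le).ssubset_of_ne hne

lemma continuous_scottPN_comp {r : Set ℕ → Ordinal} {X : Ordinal → Set ℕ}
    (hX : AntitoneOn X (Iic α)) (hr : ∀ Z, r Z ≤ α)
    (hopen : ∀ γ ≤ α, IsOpen[ScottPN] {Z | r Z < γ}) :
    Continuous[ScottPN, ScottPN] (X ∘ r) := by
  refine continuous_generateFrom_iff.mpr ?_
  rintro _ ⟨A, -, rfl⟩
  by_cases hA : A ⊆ X α
  · have huniv : X ∘ r ⁻¹' {W | A ⊆ W} = Set.univ :=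
      eq_univ_of_forall fun Z => hA.trans (hX (hr Z) self_mem_Iic (hr Z))
    rw [huniv]
    exact TopologicalSpace.GenerateOpen.univ
  · -- `A ⊆ X (r Z)` holds exactly when `r Z` is below the first index where `A ⊆ X β` fails.
    set β₀ := sInf {β | ¬ A ⊆ X β}
    have hβ₀ : ¬ A ⊆ X β₀ := csInf_mem (s := {β | ¬ A ⊆ X β}) ⟨α, hA⟩
    have hβ₀α : β₀ ≤ α := csInf_le' hA
    have hpre : X ∘ r ⁻¹' {W | A ⊆ W} = {Z | r Z < β₀} := by
      ext Z
      refine ⟨fun hZ => not_le.mp fun hle => hβ₀ (hZ.trans (hX hβ₀α (hr Z) hle)), fun hZ => ?_⟩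
      by_contra hZA
      exact (csInf_le' (s := {β | ¬ A ⊆ X β}) hZA).not_gt hZ
    rw [hpre]
    exact hopen β₀ hβ₀α

lemma wadgeLe_of_altChain {X : Ordinal → Set ℕ} (hX : AltChain H α X) {A : Set (Set ℕ)}
    (hA : MemD ScottPN α A) : WadgeLe A H := by
  obtain ⟨U, hU, rfl⟩ := hA
  refine ⟨X ∘ dRank α U, continuous_scottPN_comp hX.strictAntiOn.antitoneOn (fun _ => dRank_le)
    fun γ hγ => isOpen_setOf_dRank_lt hU hγ, ?_⟩
  ext Z
  rw [mem_DOp_iff_dRank, mem_preimage, Function.comp_apply, hX.2 _ dRank_le]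

/-- The set to reduce is `DOp α U` with `U β = {Z | ¬ Z ⊆ X (β + 1)}`, at which `X δ` has
rank `δ`. -/
lemma exists_altChain_of_wadgeHard (hα : (Iic α).Countable)
    (hard : ∀ A : Set (Set ℕ), MemD ScottPN α A → WadgeLe A H) :
    ∃ X : Ordinal → Set ℕ, AltChain H α X := by
  obtain ⟨X, hX⟩ := exists_strictAntiOn_set_nat hα
  set U : Ordinal → Set (Set ℕ) := fun β => {Z | ¬ Z ⊆ X (β + 1)}
  have hrank : ∀ δ ≤ α, dRank α U (X δ) = δ := by
    refine fun δ hδ => dRank_eq_of hδ (fun β hβ hXδ => hXδ ?_) fun hδα hXδ => ?_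
    · exact hX.antitoneOn (add_one_le_iff.mpr (hβ.trans_le hδ)) hδ (add_one_le_iff.mpr hβ)
    · exact (hX (mem_Iic.mpr hδ) (mem_Iic.mpr (add_one_le_iff.mpr hδα)) (lt_add_one δ)).not_subset
        hXδ
  obtain ⟨f, hf, hred⟩ := hard (DOp α U) ⟨U, fun β _ => isOpen_scottPN_setOf_not_subset _, rfl⟩
  refine ⟨f ∘ X, altChain_of_antitoneOn
    ((monotone_of_continuous_scottPN hf).comp_antitoneOn hX.antitoneOn) fun β hβ => ?_⟩
  rw [Function.comp_apply, ← mem_preimage, ← hred, mem_DOp_iff_dRank, hrank β hβ]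

end Chains

theorem wadge_hard_iff_alternating_chain_general (H : Set (Set ℕ))
    (α : Ordinal) (h2 : α.card ≤ Cardinal.aleph0) :
    (∀ A : Set (Set ℕ), MemD ScottPN α A → WadgeLe A H) ↔
      ∃ X : Ordinal → Set ℕ, AltChain H α X :=
  ⟨exists_altChain_of_wadgeHard (countable_Iic_of_card_le_aleph0 h2),
    fun ⟨_, hX⟩ _ hA => wadgeLe_of_altChain hX hA⟩

/-- `H ⊆ 𝒫(ℕ)` is Wadge hard for `D_α(𝒫(ℕ))` iff there is a decreasing
`H`-alternating chain in `𝒫(ℕ)` of length `α+1`. -/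
theorem wadge_hard_iff_alternating_chain (H : Set (Set ℕ))
    (α : Ordinal) (h1 : 1 ≤ α) (h2 : α.card ≤ Cardinal.aleph0) :
    (∀ A : Set (Set ℕ), MemD ScottPN α A → WadgeLe A H) ↔
      ∃ X : Ordinal → Set ℕ, AltChain H α X :=
  wadge_hard_iff_alternating_chain_general H α h2
end

section
/- The family 𝒫_{<ω}(ℕ) of finite subsets of ℕ is Wadge hard both for Σ⁰₂ of the Cantor space and for the closed subsets of 𝒫(ℕ): (1) every set in Σ⁰₂ of the Cantor space 2^ω (the space ℕ → Bool with the product topology) is of the form f⁻¹(𝒫_{<ω}(ℕ)) for some continuous f : 2^ω → 𝒫(ℕ); (2) every Scott-closed family 𝒴 ⊆ 𝒫(ℕ) is of the form g⁻¹(𝒫_{<ω}(ℕ)) for some continuous g : 𝒫(ℕ) → 𝒫(ℕ). -/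
/-!
A set whose complement is a `G_δ` set `⋂ₖ Oₖ` (with the `Oₖ` open and, after taking finite
intersections, decreasing) is the preimage of the finite sets under `x ↦ {k | x ∈ Oₖ}`: this
value is a down-set of `ℕ`, hence finite exactly when `x ∉ ⋂ₖ Oₖ`, and the map is Scott
continuous because each `{x | k ∈ f x} = Oₖ` is open. Both `Σ⁰₂` sets of the (metrizable,
hence perfectly normal) Cantor space and closed sets of any space have `G_δ` complements.
-/

open Topology

/-- Membership in `Σ⁰₂(E)`: countable unions of differences of open sets. -/
def MemSigma2 {E : Type*} (t : TopologicalSpace E) (A : Set E) : Prop :=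
  ∃ U V : ℕ → Set E, (∀ n, IsOpen[t] (U n)) ∧ (∀ n, IsOpen[t] (V n)) ∧
    A = ⋃ n, U n \ V n

theorem continuous_scottPN_iff {E : Type*} [TopologicalSpace E] {f : E → Set ℕ} :
    Continuous[‹_›, ScottPN] f ↔ ∀ n, IsOpen {x | n ∈ f x} := by
  refine ⟨fun hf n => ?_, fun hf => continuous_generateFrom_iff.mpr ?_⟩
  · have hopen : IsOpen[ScottPN] {X : Set ℕ | {n} ⊆ X} :=
      TopologicalSpace.isOpen_generateFrom_of_mem ⟨{n}, Set.finite_singleton n, rfl⟩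
    simpa using @Continuous.isOpen_preimage _ _ _ ScottPN f hf _ hopen
  · rintro _ ⟨B, hB, rfl⟩
    have hpre : f ⁻¹' {X | B ⊆ X} = ⋂ n ∈ B, {x | n ∈ f x} := by
      ext x
      simp [Set.subset_def]
    rw [hpre]
    exact hB.isOpen_biInter fun n _ => hf n

theorem MemSigma2.isGδ_compl {E : Type*} [TopologicalSpace E] [PerfectlyNormalSpace E]
    {A : Set E} (hA : MemSigma2 ‹_› A) : IsGδ Aᶜ := by
  obtain ⟨U, V, hU, hV, rfl⟩ := hA
  simp only [Set.compl_iUnion, Set.sdiff_eq, Set.compl_inter, compl_compl]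
  exact .iInter fun n => (hU n).isClosed_compl.isGδ.union (hV n).isGδ

theorem Antitone.finite_setOf_mem_iff_notMem_iInter {β : Type*} {S : ℕ → Set β}
    (hS : Antitone S) {x : β} : {k | x ∈ S k}.Finite ↔ x ∉ ⋂ k, S k := by
  rw [Set.mem_iInter, not_forall]
  constructor
  · intro hfin
    by_contra! hall
    exact Set.infinite_univ (by simpa [hall] using hfin)
  · rintro ⟨k, hk⟩
    exact (Set.finite_Iio k).subset fun j hj =>
      lt_of_not_ge fun hkj => hk (hS hkj hj)

theorem exists_continuous_scottPN_preimage_finite_of_isGδ_compl {E : Type*}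
    [TopologicalSpace E] {A : Set E} (hA : IsGδ Aᶜ) :
    ∃ f : E → Set ℕ, Continuous[‹_›, ScottPN] f ∧ A = f ⁻¹' {X | X.Finite} := by
  obtain ⟨O, hO, hAO⟩ := hA.eq_iInter_nat
  refine ⟨fun x => {k | x ∈ Set.dissipate O k}, continuous_scottPN_iff.mpr fun k => ?_, ?_⟩
  · exact (Set.finite_Iic k).isOpen_biInter fun i _ => hO i
  · ext x
    rw [Set.mem_preimage, Set.mem_ofPred_eq,
      Antitone.finite_setOf_mem_iff_notMem_iInter Set.antitone_dissipate, Set.iInter_dissipate,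
      ← hAO, Set.notMem_compl_iff]

/-- The family of finite subsets of `ℕ` is Wadge hard for `Σ⁰₂` of the Cantor
space `2^ω = (ℕ → Bool)` and for the closed subsets of `𝒫(ℕ)`. -/
theorem finite_sets_hard_for_cantor_sigma2_and_closed :
    (∀ A : Set (ℕ → Bool), MemSigma2 Pi.topologicalSpace A →
      ∃ f : (ℕ → Bool) → Set ℕ, Continuous[Pi.topologicalSpace, ScottPN] f ∧
        A = f ⁻¹' {X : Set ℕ | X.Finite}) ∧
    (∀ Y : Set (Set ℕ), IsClosed[ScottPN] Y →
      ∃ g : Set ℕ → Set ℕ, Continuous[ScottPN, ScottPN] g ∧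
        Y = g ⁻¹' {X : Set ℕ | X.Finite}) := by
  refine ⟨fun A hA => exists_continuous_scottPN_preimage_finite_of_isGδ_compl hA.isGδ_compl,
    fun Y hY => ?_⟩
  let := ScottPN
  exact exists_continuous_scottPN_preimage_finite_of_isGδ_compl hY.isOpen_compl.isGδ
end
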